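/- arXiv:2401.02078 — 3 statements merged into one kernel-verified Lean document; each statement's English description precedes it below -/
import Mathlib

section
/- Let h ≥ 1, let m_0, m_1, …, m_h be positive real numbers, and let ℓ_0 = 1 and ℓ_1, …, ℓ_h be positive integers such that ℓ_{h−j} divides ℓ_{h−j+1} for 1 ≤ j ≤ h. For 1 ≤ j ≤ h let C_j be the column vector of length ℓ_{h−j+1}/ℓ_{h−j} with all entries equal to 1/√(m_{h−j} m_{h−j+1}), and let B_j be the ℓ_{h−j+1} × ℓ_{h−j} block diagonal matrix with ℓ_{h−j} copies of C_j on its diagonal. Let α_1, …, α_{h+1} be real numbers and let P be the block tridiagonal matrix with diagonal blocks α_1 I_{ℓ_h}, α_2 I_{ℓ_{h−1}}, …, α_h I_{ℓ_1}, α_{h+1} I_{ℓ_0} (the last block is the 1×1 matrix [α_{h+1}]), superdiagonal blocks B_1, …, B_h and subdiagonal blocks B_1^T, …, B_h^T. Define β_1 = α_1 and β_j = α_j − (ℓ_{h−j+2}/ℓ_{h−j+1}) · 1/(m_{h−j+1} m_{h−j+2} β_{j−1}) for 2 ≤ j ≤ h+1. If β_j ≠ 0 for all j = 1, …, h and β_{h+1}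 ≠ 0, then det P = β_1^{ℓ_h} β_2^{ℓ_{h−1}} ⋯ β_h^{ℓ_1} β_{h+1}. -/
/-!
Block Gaussian elimination. Let `U` be the strictly block upper triangular part of `P` and `D` the
block diagonal matrix with blocks `β_j I`. Then `P = Kᵀ D K` for the unipotent `K = 1 + D⁻¹ U`, so
`det P = det D`. Expanding `Kᵀ D K`, the identity reduces to `Uᵀ D⁻¹ U = diag(α_j - β_j)`, which is
the recurrence for `β`: the columns of `B_j` have disjoint supports of equal size, so
`B_jᵀ B_j = (ℓ_{h-j+1} / ℓ_{h-j}) / (m_{h-j} m_{h-j+1}) I`.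
-/

open Matrix

/-- The index type of a block matrix with `h+1` diagonal blocks of sizes
`ℓ h, ℓ (h-1), …, ℓ 0` (from top to bottom). -/
abbrev BTidx (h : ℕ) (ℓ : ℕ → ℕ) : Type := (i : Fin (h + 1)) × Fin (ℓ (h - i.val))

/-- Entry `(a, b)` of the block `B_{i+1}` (of size `ℓ (h-i) × ℓ (h-i-1)`):
the block diagonal matrix with `ℓ (h-i-1)` copies of the column vector of length
`ℓ (h-i) / ℓ (h-i-1)` with all entries `1/√(m (h-i-1) * m (h-i))` on its diagonal. -/
noncomputable def bEnt (h : ℕ) (ℓ : ℕ → ℕ) (m : ℕ → ℝ) (i a b : ℕ) : ℝ :=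
  if a / (ℓ (h - i) / ℓ (h - i - 1)) = b then 1 / Real.sqrt (m (h - i - 1) * m (h - i)) else 0

/-- The block tridiagonal matrix `P` with diagonal blocks
`α 1 • I_{ℓ h}, α 2 • I_{ℓ (h-1)}, …, α (h+1) • I_{ℓ 0}`, superdiagonal blocks
`B_1, …, B_h` and subdiagonal blocks `B_1ᵀ, …, B_hᵀ`. -/
noncomputable def Pblk (h : ℕ) (ℓ : ℕ → ℕ) (m : ℕ → ℝ) (α : ℕ → ℝ) :
    Matrix (BTidx h ℓ) (BTidx h ℓ) ℝ :=
  fun p q =>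
    if p.1.val = q.1.val then
      (if p.2.val = q.2.val then α (p.1.val + 1) else 0)
    else if p.1.val + 1 = q.1.val then bEnt h ℓ m p.1.val p.2.val q.2.val
    else if q.1.val + 1 = p.1.val then bEnt h ℓ m q.1.val q.2.val p.2.val
    else 0

theorem det_one_add_eq_one_of_strictBlockTriangular {m α R : Type*} [CommRing R] [Fintype m]
    [DecidableEq m] [LinearOrder α] {N : Matrix m m R} (b : m → α)
    (hN : ∀ i j, b j ≤ b i → N i j = 0) : (1 + N).det = 1 := by
  have hK : (1 + N).BlockTriangular b := fun i j hji => by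
    rw [Matrix.add_apply, one_apply_ne (fun hij => hji.ne (by rw [hij])), hN i j hji.le, add_zero]
  refine hK.det.trans (Finset.prod_eq_one fun k _ => ?_)
  suffices (1 + N).toSquareBlock b k = 1 by rw [this, det_one]
  ext ⟨i, hi⟩ ⟨j, hj⟩
  rw [toSquareBlock_def, of_apply, Matrix.add_apply, hN i j (by rw [hi, hj]), add_zero]
  simp only [one_apply, Subtype.mk.injEq]

theorem sum_fin_ite_div_eq {R : Type*} [Semiring R] {M r n b : ℕ} (hM : M = r * n) (hb : b < n)
    (x : R) : ∑ a : Fin M, (if a.val / r = b then x else 0) = r * x := by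
  subst hM
  rcases Nat.eq_zero_or_pos r with rfl | hr
  · simp
  rw [Fin.sum_univ_eq_sum_range (fun a => if a / r = b then x else 0), ← Finset.sum_filter]
  have hfiber :
      (Finset.range (r * n)).filter (fun a => a / r = b) = Finset.Ico (b * r) (b * r + r) := by
    have : b * r + r ≤ r * n := by nlinarith
    ext a
    simp only [Finset.mem_filter, Finset.mem_range, Finset.mem_Ico, Nat.div_eq_iff hr]
    omega
  simp [hfiber]

section BlockTridiagonal

variable {R : Type*} {N : ℕ} {s : ℕ → ℕ}

abbrev BlockIdx (N : ℕ) (s : ℕ → ℕ) : Type := (i : Fin N) × Fin (s i)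

/- `B i a b` is entry `(a, b)` of the block in position `(i, i + 1)`. Indexing entries by natural
numbers avoids casts between `Fin (s i)` and `Fin (s j)` when `i = j` only propositionally. -/
def superdiagBlocks [Zero R] (B : ℕ → ℕ → ℕ → R) : Matrix (BlockIdx N s) (BlockIdx N s) R :=
  fun p q => if p.1.val + 1 = q.1.val then B p.1 p.2 q.2 else 0

def blockTridiag [Semiring R] (α : ℕ → R) (B : ℕ → ℕ → ℕ → R) :
    Matrix (BlockIdx N s) (BlockIdx N s) R :=
  diagonal (fun p => α p.1) + superdiagBlocks B + (superdiagBlocks B)ᵀ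

theorem transpose_superdiagBlocks_mul_diagonal_mul [CommSemiring R] {B : ℕ → ℕ → ℕ → R}
    {c : ℕ → R} (hB : ∀ i, i + 1 < N → ∀ b b' : Fin (s (i + 1)),
      ∑ a : Fin (s i), B i a b * B i a b' = if b = b' then c i else 0) (w : ℕ → R) :
    (superdiagBlocks B)ᵀ * diagonal (fun p => w p.1) * superdiagBlocks (N := N) (s := s) B =
      diagonal (fun p => if p.1.val = 0 then 0 else c (p.1 - 1) * w (p.1 - 1)) := by
  ext ⟨⟨_ | j, hj⟩, pj⟩ ⟨qi, qj⟩
  · simp [superdiagBlocks, mul_apply, diagonal_apply]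
  rw [mul_apply, Fintype.sum_sigma, Fintype.sum_eq_single ⟨j, by omega⟩]
  · rcases eq_or_ne qi ⟨j + 1, hj⟩ with rfl | hq
    · have hsum := hB j hj pj qj
      simp only [mul_diagonal, transpose_apply, superdiagBlocks, if_true, diagonal_apply,
        Sigma.mk.inj_iff, heq_eq_eq, true_and]
      simp only [mul_right_comm _ (w j), ← Finset.sum_mul, hsum]
      split_ifs <;> simp_all [mul_comm]
    · have hq' : j + 1 ≠ qi.val := fun h => hq (Fin.ext h.symm)
      simp [superdiagBlocks, hq', Ne.symm hq]
  · intro k hk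
    have hkj : k.val + 1 ≠ j + 1 := fun h => hk (Fin.ext (Nat.succ_injective h))
    refine Finset.sum_eq_zero fun kj _ => ?_
    rw [mul_diagonal, transpose_apply, superdiagBlocks, if_neg hkj, zero_mul, zero_mul]

theorem diagonal_mul_inv_mul_superdiagBlocks [DivisionRing R] {β : ℕ → R}
    (hβ : ∀ i, i + 1 < N → β i ≠ 0) (B : ℕ → ℕ → ℕ → R) :
    diagonal (fun p => β p.1) * diagonal (fun p => (β p.1)⁻¹) *
      superdiagBlocks (N := N) (s := s) B = superdiagBlocks B := by
  ext p q
  rw [diagonal_mul_diagonal, diagonal_mul, superdiagBlocks]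
  split_ifs with hpq
  · rw [mul_inv_cancel₀ (hβ _ (hpq ▸ q.1.isLt)), one_mul]
  · rw [mul_zero]

variable [Field R] {α β c : ℕ → R} {B : ℕ → ℕ → ℕ → R}

theorem blockTridiag_eq_transpose_mul_diagonal_mul
    (hB : ∀ i, i + 1 < N → ∀ b b' : Fin (s (i + 1)),
      ∑ a : Fin (s i), B i a b * B i a b' = if b = b' then c i else 0)
    (hβ0 : β 0 = α 0) (hβ : ∀ i, i + 1 < N → β (i + 1) = α (i + 1) - c i / β i)
    (hβne : ∀ i, i + 1 < N → β i ≠ 0) :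
    blockTridiag (N := N) (s := s) α B =
      (1 + diagonal (fun p => (β p.1)⁻¹) * superdiagBlocks B)ᵀ * diagonal (fun p => β p.1) *
        (1 + diagonal (fun p => (β p.1)⁻¹) * superdiagBlocks B) := by
  have hpivots : diagonal (fun p => β p.1) +
      (superdiagBlocks B)ᵀ * diagonal (fun p => (β p.1)⁻¹) * superdiagBlocks B =
        diagonal fun p : BlockIdx N s => α p.1 := by
    rw [transpose_superdiagBlocks_mul_diagonal_mul hB fun i => (β i)⁻¹, diagonal_add]
    congr 1
    funext p
    obtain ⟨⟨_ | j, hj⟩, _⟩ := p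
    · simp [hβ0]
    · simp [hβ j hj, div_eq_mul_inv]
  set U : Matrix (BlockIdx N s) (BlockIdx N s) R := superdiagBlocks B
  set D : Matrix (BlockIdx N s) (BlockIdx N s) R := diagonal fun p => β p.1
  set D' : Matrix (BlockIdx N s) (BlockIdx N s) R := diagonal fun p => (β p.1)⁻¹
  have hU : D * D' * U = U := diagonal_mul_inv_mul_superdiagBlocks hβne B
  have hUt : Uᵀ * D' * D = Uᵀ := by
    simpa only [transpose_mul, D, D', diagonal_transpose, mul_assoc] using congrArg transpose hU
  calc blockTridiag α B = D + Uᵀ * D' * U + U + Uᵀ := by rw [hpivots]; rfl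
    _ = D + D * D' * U + Uᵀ * D' * D + Uᵀ * D' * (D * D' * U) := by rw [hU, hUt]; abel
    _ = (1 + Uᵀ * D') * D * (1 + D' * U) := by noncomm_ring
    _ = (1 + D' * U)ᵀ * D * (1 + D' * U) := by
        rw [transpose_add, transpose_one, transpose_mul, diagonal_transpose]

theorem det_blockTridiag
    (hB : ∀ i, i + 1 < N → ∀ b b' : Fin (s (i + 1)),
      ∑ a : Fin (s i), B i a b * B i a b' = if b = b' then c i else 0)
    (hβ0 : β 0 = α 0) (hβ : ∀ i, i + 1 < N → β (i + 1) = α (i + 1) - c i / β i)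
    (hβne : ∀ i, i + 1 < N → β i ≠ 0) :
    (blockTridiag (N := N) (s := s) α B).det = ∏ i : Fin N, β i ^ s i := by
  have hK : (1 + diagonal (fun p : BlockIdx N s => (β p.1)⁻¹) * superdiagBlocks B).det = 1 :=
    det_one_add_eq_one_of_strictBlockTriangular Sigma.fst fun p q hqp => by
      rw [diagonal_mul, superdiagBlocks, if_neg (by rw [Fin.le_iff_val_le_val] at hqp; omega),
        mul_zero]
  rw [blockTridiag_eq_transpose_mul_diagonal_mul hB hβ0 hβ hβne, det_mul, det_mul, det_transpose,
    hK, one_mul, mul_one, det_diagonal, Fintype.prod_sigma]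
  simp

end BlockTridiagonal

theorem sum_bEnt_mul_bEnt (h : ℕ) (ℓ : ℕ → ℕ) (m : ℕ → ℝ) (i : ℕ)
    (hdvd : ℓ (h - i - 1) ∣ ℓ (h - i)) (hm : 0 ≤ m (h - i - 1) * m (h - i)) {b : ℕ}
    (hb : b < ℓ (h - i - 1)) (b' : ℕ) :
    ∑ a : Fin (ℓ (h - i)), bEnt h ℓ m i a b * bEnt h ℓ m i a b' =
      if b = b' then (ℓ (h - i) : ℝ) / ℓ (h - i - 1) / (m (h - i - 1) * m (h - i)) else 0 := by
  simp only [bEnt, ite_zero_mul_ite_zero]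
  split_ifs with hbb
  · subst hbb
    simp only [and_self]
    rw [sum_fin_ite_div_eq (Nat.div_mul_cancel hdvd).symm hb, Nat.cast_div_charZero hdvd,
      one_div_mul_one_div, Real.mul_self_sqrt hm, mul_one_div]
  · exact Finset.sum_eq_zero fun a _ => if_neg fun hab => hbb (hab.1.symm.trans hab.2)

theorem Pblk_eq_blockTridiag (h : ℕ) (ℓ : ℕ → ℕ) (m : ℕ → ℝ) (α : ℕ → ℝ) :
    Pblk h ℓ m α = blockTridiag (s := fun k => ℓ (h - k)) (fun i => α (i + 1)) (bEnt h ℓ m) := by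
  ext ⟨pi, pj⟩ ⟨qi, qj⟩
  simp only [Pblk, blockTridiag, superdiagBlocks, Matrix.add_apply, diagonal_apply,
    transpose_apply]
  rcases eq_or_ne pi qi with rfl | hpq
  · simp [Fin.val_inj]
  · have hpq' : pi.val ≠ qi.val := fun h => hpq (Fin.ext h)
    simp only [hpq', if_false, Sigma.mk.injEq, hpq, false_and, zero_add]
    split_ifs <;> first | omega | simp

theorem stmt5_general (h : ℕ) (m : ℕ → ℝ) (hm : ∀ i, i ≤ h → 0 < m i)
    (ℓ : ℕ → ℕ) (hℓ0 : ℓ 0 = 1)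
    (hdvd : ∀ j, 1 ≤ j → j ≤ h → ℓ (h - j) ∣ ℓ (h - j + 1))
    (α : ℕ → ℝ) (β : ℕ → ℝ)
    (hβ1 : β 1 = α 1)
    (hβ : ∀ j, 2 ≤ j → j ≤ h + 1 →
      β j = α j - ((ℓ (h + 2 - j) : ℝ) / (ℓ (h + 1 - j) : ℝ)) *
        (1 / (m (h + 1 - j) * m (h + 2 - j) * β (j - 1))))
    (hne : ∀ j, 1 ≤ j → j ≤ h → β j ≠ 0) :
    (Pblk h ℓ m α).det = (∏ j ∈ Finset.Icc 1 h, β j ^ ℓ (h + 1 - j)) * β (h + 1) := by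
  have hB : ∀ i, i + 1 < h + 1 → ∀ b b' : Fin (ℓ (h - (i + 1))),
      ∑ a : Fin (ℓ (h - i)), bEnt h ℓ m i a b * bEnt h ℓ m i a b' =
        if b = b' then (ℓ (h - i) : ℝ) / ℓ (h - i - 1) / (m (h - i - 1) * m (h - i)) else 0 := by
    intro i hi b b'
    have hdvd' : ℓ (h - i - 1) ∣ ℓ (h - i) := by
      simpa [Nat.sub_sub, show h - (i + 1) + 1 = h - i by omega]
        using hdvd (i + 1) (by omega) (by omega)
    rw [sum_bEnt_mul_bEnt h ℓ m i hdvd' (mul_pos (hm _ (by omega)) (hm _ (by omega))).le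
      (by rw [Nat.sub_sub]; exact b.isLt)]
    simp only [Fin.val_inj]
  have hrec : ∀ i, i + 1 < h + 1 → β (i + 1 + 1) = α (i + 1 + 1) -
      (ℓ (h - i) : ℝ) / ℓ (h - i - 1) / (m (h - i - 1) * m (h - i)) / β (i + 1) := by
    intro i hi
    rw [hβ (i + 2) (by omega) (by omega), show h + 2 - (i + 2) = h - i by omega,
      show h + 1 - (i + 2) = h - i - 1 by omega, show i + 2 - 1 = i + 1 from rfl]
    ring
  rw [Pblk_eq_blockTridiag,
    det_blockTridiag hB hβ1 hrec fun i hi => hne (i + 1) (by omega) (by omega),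
    Fin.prod_univ_castSucc]
  simp only [Fin.val_castSucc, Fin.val_last, Nat.sub_self, hℓ0, pow_one]
  rw [Fin.prod_univ_eq_prod_range (fun i => β (i + 1) ^ ℓ (h - i)),
    ← Finset.Ico_add_one_right_eq_Icc, Finset.prod_Ico_eq_prod_range]
  simp [add_comm 1]

theorem stmt5 (h : ℕ) (hh : 1 ≤ h) (m : ℕ → ℝ) (hm : ∀ i, i ≤ h → 0 < m i)
    (ℓ : ℕ → ℕ) (hℓ0 : ℓ 0 = 1) (hℓpos : ∀ i, i ≤ h → 0 < ℓ i)
    (hdvd : ∀ j, 1 ≤ j → j ≤ h → ℓ (h - j) ∣ ℓ (h - j + 1))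
    (α : ℕ → ℝ) (β : ℕ → ℝ)
    (hβ1 : β 1 = α 1)
    (hβ : ∀ j, 2 ≤ j → j ≤ h + 1 →
      β j = α j - ((ℓ (h + 2 - j) : ℝ) / (ℓ (h + 1 - j) : ℝ)) *
        (1 / (m (h + 1 - j) * m (h + 2 - j) * β (j - 1))))
    (hne : ∀ j, 1 ≤ j → j ≤ h → β j ≠ 0) (hne' : β (h + 1) ≠ 0) :
    (Pblk h ℓ m α).det = (∏ j ∈ Finset.Icc 1 h, β j ^ ℓ (h + 1 - j)) * β (h + 1) :=
  stmt5_general h m hm ℓ hℓ0 hdvd α β hβ1 hβ hne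
end

section
/- Let T^1_{m_0,m_1,…,m_{h−1}} be a level-wise regular tree with one root and n vertices, let ψ = { j ∈ {1,…,h} : |L_{h−j+1}| > |L_{h−j}| }, and let φ_0, φ_1, …, φ_{h+1} be the associated polynomials. If λ ∈ ℝ satisfies φ_j(λ) ≠ 0 for all j = 1, …, h and φ_{h+1}(λ) ≠ 0, then det(λ I_n − R(T^1)) = φ_{h+1}(λ) · ∏_{j ∈ ψ} φ_j(λ)^{|L_{h−j+1}| − |L_{h−j}|}. -/
/-!
`λ • 1 - R(T)` factors as `(1 - P D⁻¹) D (1 - P D⁻¹)ᵀ`, where `P` is the part of `R(T)` leading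
from each vertex to its children and `D` is diagonal with the entry
`δ i = φ (h - i + 1) λ / φ (h - i) λ` at the vertices of the layer `L i`. A vertex of `L i` has
`|L (i + 1)| / |L i|` children, so the three-term recurrence of the `φ j` says exactly that
`D + P D⁻¹ Pᵀ = λ • 1`. The factor `1 - P D⁻¹` is unitriangular with respect to the layers, hence
`det (λ • 1 - R(T)) = ∏ i, δ i ^ |L i|`, and this product telescopes to the claimed one because
the layer sizes do not decrease.
-/

open Matrix

noncomputable def randic {V : Type*} [Fintype V] [DecidableEq V]
    (G : SimpleGraph V) [DecidableRel G.Adj] : Matrix V V ℝ :=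
  fun u v => if G.Adj u v then 1 / Real.sqrt ((G.degree u : ℝ) * (G.degree v : ℝ)) else 0

open Finset

namespace Matrix

variable {n K : Type*} [Fintype n] [DecidableEq n] [Field K]

theorem det_one_sub_of_lt {α : Type*} [LinearOrder α] (b : n → α) {N : Matrix n n K}
    (hN : ∀ i j, N i j ≠ 0 → b i < b j) : det (1 - N) = 1 := by
  have hzero : ∀ i j, b j ≤ b i → N i j = 0 := fun i j hji =>
    not_not.mp fun h => (hN i j h).not_ge hji
  have htri : BlockTriangular (1 - N) b := fun i j hji => by
    rw [sub_apply, one_apply_ne (by rintro rfl; exact hji.false), hzero i j hji.le, sub_zero]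
  rw [htri.det]
  refine prod_eq_one fun k _ => ?_
  have hblock : (1 - N).toSquareBlock b k = 1 := by
    ext i j
    simp [toSquareBlock_def, one_apply, hzero i j (j.2.trans i.2.symm).le, Subtype.ext_iff]
  rw [hblock, det_one]

theorem det_diagonal_add_mul_diagonal_inv_mul_transpose_sub_sub {α : Type*} [LinearOrder α]
    (b : n → α) {P : Matrix n n K} (hP : ∀ i j, P i j ≠ 0 → b i < b j) {d : n → K}
    (hd : ∀ i, d i ≠ 0) :
    det (diagonal d + P * diagonal d⁻¹ * Pᵀ - P - Pᵀ) = ∏ i, d i := by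
  have hinv : diagonal d⁻¹ * diagonal d = 1 := by simp [hd]
  have hinv' : diagonal d * diagonal d⁻¹ = 1 := by simp [hd]
  have hfac : diagonal d + P * diagonal d⁻¹ * Pᵀ - P - Pᵀ =
      (1 - P * diagonal d⁻¹) * diagonal d * (1 - P * diagonal d⁻¹)ᵀ := by
    rw [transpose_sub, transpose_one, transpose_mul, diagonal_transpose]
    calc _ = diagonal d - P * (diagonal d⁻¹ * diagonal d) - diagonal d * diagonal d⁻¹ * Pᵀ +
          P * (diagonal d⁻¹ * diagonal d) * diagonal d⁻¹ * Pᵀ := by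
          rw [hinv, hinv']; noncomm_ring
      _ = _ := by noncomm_ring
  rw [hfac, det_mul, det_mul, det_transpose, det_one_sub_of_lt b, det_diagonal, one_mul, mul_one]
  intro i j hij
  rw [mul_diagonal] at hij
  exact hP i j (left_ne_zero_of_mul hij)

end Matrix

theorem prod_range_div_pow_telescope {K : Type*} [Field K] (a : ℕ → K) (e : ℕ → ℕ) (n : ℕ)
    (ha : ∀ j, 1 ≤ j → j ≤ n → a j ≠ 0) (he : ∀ j < n, e (j + 1) ≤ e j) :
    ∏ j ∈ range (n + 1), (a (j + 1) / a j) ^ e j =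
      a (n + 1) ^ e n * (∏ j ∈ Icc 1 n, a j ^ (e (j - 1) - e j)) / a 0 ^ e 0 := by
  induction n with
  | zero => simp [div_pow]
  | succ n ih =>
    rw [prod_range_succ, ih (fun j hj₁ hj₂ => ha j hj₁ (by omega)) (fun j hj => he j (by omega)),
      prod_Icc_succ_top (by omega), Nat.add_sub_cancel]
    have han : a (n + 1) ≠ 0 := ha (n + 1) (by omega) le_rfl
    have hpow : a (n + 1) ^ e n = a (n + 1) ^ (e n - e (n + 1)) * a (n + 1) ^ e (n + 1) := by
      rw [← pow_add, Nat.sub_add_cancel (he n (by omega))]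
    rw [hpow, div_pow]
    field_simp

theorem prod_range_div_pow_eq_mul_prod_filter {K : Type*} [Field K] (a : ℕ → K) (ℓ : ℕ → ℕ)
    (h : ℕ) (ha0 : a 0 = 1) (ha : ∀ j, 1 ≤ j → j ≤ h → a j ≠ 0) (hℓ0 : ℓ 0 = 1)
    (hℓ : ∀ i < h, ℓ i ≤ ℓ (i + 1)) :
    ∏ i ∈ range (h + 1), (a (h - i + 1) / a (h - i)) ^ ℓ i =
      a (h + 1) * ∏ j ∈ (Icc 1 h).filter (fun j => ℓ (h - j) < ℓ (h - j + 1)),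
        a j ^ (ℓ (h - j + 1) - ℓ (h - j)) := by
  rw [← prod_range_reflect]
  have hreflect : ∀ j ∈ range (h + 1),
      (a (h - (h + 1 - 1 - j) + 1) / a (h - (h + 1 - 1 - j))) ^ ℓ (h + 1 - 1 - j) =
        (a (j + 1) / a j) ^ ℓ (h - j) := fun j hj => by
    rw [mem_range] at hj
    rw [show h + 1 - 1 - j = h - j by omega, show h - (h - j) = j by omega]
  have hanti : ∀ j < h, ℓ (h - (j + 1)) ≤ ℓ (h - j) := fun j hj => by
    simpa only [show h - (j + 1) + 1 = h - j by omega] using hℓ (h - (j + 1)) (by omega)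
  rw [prod_congr rfl hreflect, prod_range_div_pow_telescope a (fun j => ℓ (h - j)) h ha hanti,
    Nat.sub_self, hℓ0, pow_one, ha0, one_pow, div_one]
  congr 1
  rw [prod_filter_of_ne fun j _ hj => by contrapose! hj; rw [Nat.sub_eq_zero_of_le hj, pow_zero]]
  refine prod_congr rfl fun j hj => ?_
  rw [mem_Icc] at hj
  rw [show h - (j - 1) = h - j + 1 by omega]

theorem div_add_div_div_eq_of_recurrence {K : Type*} [Field K] {φ c : ℕ → K} {x : K} {h : ℕ}
    (hφ0 : φ 0 = 1) (hφ1 : φ 1 = x)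
    (hφ : ∀ j, 2 ≤ j → j ≤ h + 1 → φ j = x * φ (j - 1) - c (h + 1 - j) * φ (j - 2))
    (hne : ∀ j, 1 ≤ j → j ≤ h → φ j ≠ 0) (hc : ∀ i, h ≤ i → c i = 0) (i : ℕ) :
    φ (h - i + 1) / φ (h - i) + c i / (φ (h - (i + 1) + 1) / φ (h - (i + 1))) = x := by
  rcases lt_or_ge i h with hi | hi
  · have hne' := hne (h - i) (by omega) (by omega)
    rw [show h - (i + 1) + 1 = h - i by omega, hφ (h - i + 1) (by omega) (by omega),
      show h + 1 - (h - i + 1) = i by omega, show h - i + 1 - 1 = h - i by omega,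
      show h - i + 1 - 2 = h - (i + 1) by omega]
    field_simp
    ring
  · rw [hc i hi, Nat.sub_eq_zero_of_le hi, hφ0, hφ1, zero_div, div_one, add_zero]

namespace SimpleGraph

variable {V : Type*} {G : SimpleGraph V} {r u v w : V}

theorem exists_adj_dist_add_one_eq (hv : G.dist r v ≠ 0) :
    ∃ u, G.Adj u v ∧ G.dist r u + 1 = G.dist r v := by
  obtain ⟨p, hp⟩ := exists_walk_of_dist_ne_zero hv
  have hnil : ¬ p.Nil := by rw [Walk.not_nil_iff_lt_length]; omega
  have hadj := p.adj_penultimate hnil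
  have hle : G.dist r p.penultimate ≤ p.dropLast.length := dist_le _
  have := hadj.diff_dist_adj (u := r)
  rw [Walk.length_dropLast] at hle
  exact ⟨p.penultimate, hadj, by omega⟩

theorem IsTree.eq_of_adj_of_dist_add_one_eq (hG : G.IsTree) (hu : G.Adj u w) (hv : G.Adj v w)
    (hdu : G.dist r u + 1 = G.dist r w) (hdv : G.dist r v + 1 = G.dist r w) : u = v := by
  classical
  obtain ⟨q, hq, -⟩ := hG.connected.exists_path_of_dist r w
  have hpen : ∀ x, G.Adj x w → G.dist r x + 1 = G.dist r w → x = q.penultimate := by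
    intro x hx hdx
    obtain ⟨p, hp, hlen⟩ := hG.connected.exists_path_of_dist r x
    have hw : w ∉ p.support := fun hw => by
      have := dist_le (p.takeUntil w hw)
      have := p.length_takeUntil_le_length hw
      omega
    exact hG.isAcyclic.eq_penultimate_of_adj_end hq hx.symm
      (hG.isAcyclic.mem_support_of_ne_mem_support_of_adj_of_isPath hq hp hx.symm hw)
  rw [hpen u hu hdu, hpen v hv hdv]

noncomputable section Layers

variable [Fintype V]

variable (G) in
def layer (r : V) (i : ℕ) : Finset V := {v | G.dist r v = i}

@[simp]
theorem mem_layer {i : ℕ} : v ∈ G.layer r i ↔ G.dist r v = i := by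
  simp [layer]

theorem ncard_setOf_dist_eq (r : V) (i : ℕ) : {v | G.dist r v = i}.ncard = #(G.layer r i) := by
  rw [Set.ncard_eq_toFinset_card', Set.toFinset_ofPred, layer]

theorem layer_eq_empty_of_lt {h i : ℕ} (hheight : ∀ v, G.dist r v ≤ h) (hi : h < i) :
    G.layer r i = ∅ :=
  eq_empty_of_forall_notMem fun v hv => by
    have := hheight v
    rw [mem_layer] at hv
    omega

theorem layer_nonempty_of_le {n i : ℕ} (hv : G.dist r v = n) (hi : i ≤ n) :
    (G.layer r i).Nonempty := by
  induction n generalizing v with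
  | zero => exact ⟨v, by rw [mem_layer]; omega⟩
  | succ n ih =>
    obtain rfl | hi := eq_or_lt_of_le hi
    · exact ⟨v, mem_layer.mpr hv⟩
    obtain ⟨u, -, hu⟩ := exists_adj_dist_add_one_eq (G := G) (r := r) (v := v) (by omega)
    exact ih (v := u) (by omega) (by omega)

theorem Connected.layer_zero (hG : G.Connected) : G.layer r 0 = {r} := by
  ext v
  rw [mem_layer, hG.dist_eq_zero_iff, mem_singleton, eq_comm]

theorem prod_dist_eq_prod_range_pow_card_layer {M : Type*} [CommMonoid M] (f : ℕ → M) {h : ℕ}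
    (hheight : ∀ v, G.dist r v ≤ h) :
    ∏ v, f (G.dist r v) = ∏ i ∈ range (h + 1), f i ^ #(G.layer r i) := by
  rw [← prod_fiberwise_of_maps_to (g := G.dist r) (t := range (h + 1))
    fun v _ => mem_range.mpr (Nat.lt_succ_of_le (hheight v))]
  refine prod_congr rfl fun i _ => ?_
  rw [prod_congr rfl fun v hv => congrArg f (mem_filter.mp hv).2, prod_const]
  rfl

variable [DecidableRel G.Adj]

variable (G) in
def childFinset (r u : V) : Finset V := {w | G.Adj u w ∧ G.dist r w = G.dist r u + 1}

@[simp]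
theorem mem_childFinset : w ∈ G.childFinset r u ↔ G.Adj u w ∧ G.dist r w = G.dist r u + 1 := by
  simp [childFinset]

theorem layer_succ [DecidableEq V] (i : ℕ) :
    G.layer r (i + 1) = (G.layer r i).biUnion (G.childFinset r) := by
  ext w
  simp only [mem_layer, mem_biUnion, mem_childFinset]
  constructor
  · intro hw
    obtain ⟨u, hu, hdu⟩ := exists_adj_dist_add_one_eq (G := G) (r := r) (v := w) (by omega)
    exact ⟨u, by omega, hu, by omega⟩
  · rintro ⟨u, rfl, -, hw⟩
    exact hw

theorem IsTree.pairwiseDisjoint_childFinset (hG : G.IsTree) (s : Set V) :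
    s.PairwiseDisjoint (G.childFinset r) := by
  intro u _ v _ huv
  refine Finset.disjoint_left.mpr fun w hwu hwv => huv ?_
  rw [mem_childFinset] at hwu hwv
  exact hG.eq_of_adj_of_dist_add_one_eq hwu.1 hwv.1 hwu.2.symm hwv.2.symm

theorem IsTree.card_layer_succ (hG : G.IsTree) (i : ℕ) :
    #(G.layer r (i + 1)) = ∑ u ∈ G.layer r i, #(G.childFinset r u) := by
  classical
  rw [layer_succ, card_biUnion (hG.pairwiseDisjoint_childFinset _)]

theorem IsTree.card_childFinset_add (hG : G.IsTree) (r u : V) :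
    #(G.childFinset r u) + (if G.dist r u = 0 then 0 else 1) = G.degree u := by
  classical
  rw [← card_neighborFinset_eq_degree,
    ← card_filter_add_card_filter_not (s := G.neighborFinset u)
      (p := fun w => G.dist r w = G.dist r u + 1)]
  congr 1
  · congr 1
    ext w
    simp
  · split_ifs with hu
    · refine (card_eq_zero.mpr (filter_eq_empty_iff.mpr fun w hw => ?_)).symm
      have := hG.dist_eq_dist_add_one_of_adj r ((mem_neighborFinset _ _ _).mp hw)
      omega
    · obtain ⟨p, hp, hdp⟩ := exists_adj_dist_add_one_eq (G := G) (r := r) (v := u) hu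
      refine (card_eq_one.mpr ⟨p, eq_singleton_iff_unique_mem.mpr ⟨?_, fun w hw => ?_⟩⟩).symm
      · simp only [mem_filter, mem_neighborFinset]
        exact ⟨hp.symm, by omega⟩
      · simp only [mem_filter, mem_neighborFinset] at hw
        have := hG.dist_eq_dist_add_one_of_adj r hw.1
        exact hG.eq_of_adj_of_dist_add_one_eq hw.1.symm hp (by omega) hdp

theorem IsTree.card_layer_succ_eq_mul (hG : G.IsTree) {m : ℕ → ℕ}
    (hdeg : ∀ v, G.degree v = m (G.dist r v)) {i : ℕ} (hu : u ∈ G.layer r i) :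
    #(G.layer r (i + 1)) = #(G.layer r i) * #(G.childFinset r u) := by
  rw [hG.card_layer_succ, sum_const_nat fun x hx => ?_]
  have hx' := hG.card_childFinset_add r x
  have hu' := hG.card_childFinset_add r u
  rw [mem_layer] at hx hu
  rw [hdeg, hx] at hx'
  rw [hdeg, hu] at hu'
  omega

theorem IsTree.card_layer_le_card_layer_succ (hG : G.IsTree) {m : ℕ → ℕ}
    (hdeg : ∀ v, G.degree v = m (G.dist r v)) {i : ℕ} (hne : (G.layer r (i + 1)).Nonempty) :
    #(G.layer r i) ≤ #(G.layer r (i + 1)) := by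
  obtain ⟨w, hw⟩ := hne
  rw [mem_layer] at hw
  obtain ⟨u, hu, hdu⟩ := exists_adj_dist_add_one_eq (G := G) (r := r) (v := w) (by omega)
  rw [hG.card_layer_succ_eq_mul hdeg (u := u) (by rw [mem_layer]; omega)]
  exact Nat.le_mul_of_pos_right _ (card_pos.mpr ⟨w, by rw [mem_childFinset]; exact ⟨hu, by omega⟩⟩)

end Layers

section Randic

variable [Fintype V] [DecidableEq V] [DecidableRel G.Adj]

theorem randic_transpose : (randic G)ᵀ = randic G := by
  ext u v
  simp only [transpose_apply, randic, G.adj_comm, mul_comm]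

variable (G) in
noncomputable def downRandic (r : V) : Matrix V V ℝ :=
  fun u w => if G.dist r w = G.dist r u + 1 then randic G u w else 0

theorem mem_childFinset_of_downRandic_ne_zero (h : G.downRandic r u w ≠ 0) :
    w ∈ G.childFinset r u := by
  unfold downRandic randic at h
  split_ifs at h with hd ha
  · exact mem_childFinset.mpr ⟨ha, hd⟩
  all_goals exact absurd rfl h

theorem IsTree.randic_eq_add_transpose (hG : G.IsTree) (r : V) :
    randic G = G.downRandic r + (G.downRandic r)ᵀ := by
  ext u v
  simp only [Matrix.add_apply, transpose_apply, downRandic]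
  by_cases huv : G.Adj u v
  · rcases hG.dist_eq_dist_add_one_of_adj r huv with h | h
    · rw [if_neg (by omega), if_pos h, zero_add, ← transpose_apply (randic G), randic_transpose]
    · rw [if_pos h, if_neg (by omega), add_zero]
  · have huv' : randic G u v = 0 := if_neg huv
    have hvu : randic G v u = 0 := if_neg fun h => huv h.symm
    simp [huv', hvu]

theorem IsTree.downRandic_mul_diagonal_mul_transpose (hG : G.IsTree) (r : V) (f : V → ℝ) :
    G.downRandic r * diagonal f * (G.downRandic r)ᵀ =
      diagonal fun u => ∑ w ∈ G.childFinset r u, f w / (G.degree u * G.degree w) := by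
  ext u v
  rw [mul_apply]
  simp only [mul_diagonal, transpose_apply, diagonal_apply]
  split_ifs with huv
  · subst huv
    rw [childFinset, sum_filter]
    refine sum_congr rfl fun w _ => ?_
    by_cases hw : G.Adj u w ∧ G.dist r w = G.dist r u + 1
    · rw [if_pos hw, downRandic, if_pos hw.2, randic, if_pos hw.1]
      calc _ = f w / (√(G.degree u * G.degree w) * √(G.degree u * G.degree w)) := by ring
        _ = _ := by rw [Real.mul_self_sqrt (by positivity)]
    · have h0 : G.downRandic r u w = 0 := by
        contrapose! hw
        exact mem_childFinset.mp (mem_childFinset_of_downRandic_ne_zero hw)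
      rw [if_neg hw, h0, zero_mul, zero_mul]
  · refine sum_eq_zero fun w _ => ?_
    by_contra hne
    have hu := mem_childFinset.mp
      (mem_childFinset_of_downRandic_ne_zero (left_ne_zero_of_mul (left_ne_zero_of_mul hne)))
    have hv := mem_childFinset.mp (mem_childFinset_of_downRandic_ne_zero (right_ne_zero_of_mul hne))
    exact huv (hG.eq_of_adj_of_dist_add_one_eq hu.1 hv.1 hu.2.symm hv.2.symm)

/-- On the deepest layer `L (i + 1)` is empty, so `hrec` says `δ i = lam` there. -/
theorem IsTree.det_smul_one_sub_randic (hG : G.IsTree) {m : ℕ → ℕ}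
    (hdeg : ∀ v, G.degree v = m (G.dist r v)) (lam : ℝ) (δ : ℕ → ℝ)
    (hδ : ∀ v, δ (G.dist r v) ≠ 0)
    (hrec : ∀ i,
      δ i + #(G.layer r (i + 1)) / (#(G.layer r i) * m (i + 1) * m i) / δ (i + 1) = lam) :
    (lam • (1 : Matrix V V ℝ) - randic G).det = ∏ v, δ (G.dist r v) := by
  set d : V → ℝ := fun v => δ (G.dist r v)
  set P := G.downRandic r
  have hdiag : diagonal d + P * diagonal d⁻¹ * Pᵀ = lam • 1 := by
    rw [hG.downRandic_mul_diagonal_mul_transpose, diagonal_add, smul_one_eq_diagonal]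
    refine congrArg diagonal (funext fun u => ?_)
    rw [← hrec (G.dist r u)]
    congr 1
    have hsum : ∀ w ∈ G.childFinset r u, d⁻¹ w / (G.degree u * G.degree w) =
        (m (G.dist r u) * m (G.dist r u + 1) * δ (G.dist r u + 1))⁻¹ := by
      intro w hw
      rw [mem_childFinset] at hw
      simp only [d, Pi.inv_apply, hdeg, hw.2]
      ring
    have hℓ : (#(G.layer r (G.dist r u)) : ℝ) ≠ 0 :=
      Nat.cast_ne_zero.mpr (card_pos.mpr ⟨u, mem_layer.mpr rfl⟩).ne'
    rw [sum_congr rfl hsum, sum_const, nsmul_eq_mul,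
      hG.card_layer_succ_eq_mul hdeg (mem_layer.mpr rfl), Nat.cast_mul,
      mul_assoc (#(G.layer r (G.dist r u)) : ℝ), mul_div_mul_left _ _ hℓ]
    ring
  calc (lam • (1 : Matrix V V ℝ) - randic G).det
      = (diagonal d + P * diagonal d⁻¹ * Pᵀ - P - Pᵀ).det := by
        rw [hG.randic_eq_add_transpose r, hdiag, sub_sub]
    _ = ∏ v, d v := det_diagonal_add_mul_diagonal_inv_mul_transpose_sub_sub (G.dist r)
        (fun u w huw => by
          have := mem_childFinset.mp (mem_childFinset_of_downRandic_ne_zero huw)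
          omega) hδ

end Randic

end SimpleGraph

open SimpleGraph

theorem stmt7_general {V : Type*} [Fintype V] [DecidableEq V]
    (G : SimpleGraph V) [DecidableRel G.Adj] (r : V) (h : ℕ) (m : ℕ → ℕ)
    (htree : G.IsTree)
    (hheight : ∀ v, G.dist r v ≤ h)
    (hmax : ∃ v, G.dist r v = h)
    (hdeg : ∀ v, G.degree v = m (G.dist r v))
    (φ : ℕ → ℝ → ℝ)
    (hφ0 : ∀ x, φ 0 x = 1)
    (hφ1 : ∀ x, φ 1 x = x)
    (hφ : ∀ j, 2 ≤ j → j ≤ h + 1 → ∀ x, φ j x =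
      x * φ (j - 1) x -
        (({v : V | G.dist r v = h + 2 - j}.ncard : ℝ) /
          (({v : V | G.dist r v = h + 1 - j}.ncard : ℝ) *
            (m (h + 2 - j) : ℝ) * (m (h + 1 - j) : ℝ))) * φ (j - 2) x)
    (lam : ℝ)
    (hne : ∀ j, 1 ≤ j → j ≤ h → φ j lam ≠ 0)
    (hne' : φ (h + 1) lam ≠ 0) :
    (lam • (1 : Matrix V V ℝ) - randic G).det =
      φ (h + 1) lam *
        ∏ j ∈ (Finset.Icc 1 h).filter
            (fun j => {v : V | G.dist r v = h - j}.ncard <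
              {v : V | G.dist r v = h - j + 1}.ncard),
          φ j lam ^ ({v : V | G.dist r v = h - j + 1}.ncard -
            {v : V | G.dist r v = h - j}.ncard) := by
  simp only [ncard_setOf_dist_eq] at hφ ⊢
  have hφne : ∀ j ≤ h + 1, φ j lam ≠ 0 := by
    intro j hj
    rcases Nat.eq_zero_or_pos j with rfl | hj0
    · rw [hφ0]
      exact one_ne_zero
    · rcases hj.lt_or_eq with hj | rfl
      exacts [hne j hj0 (by omega), hne']
  have hrec := div_add_div_div_eq_of_recurrence (φ := (φ · lam))
    (c := fun i => (#(G.layer r (i + 1)) : ℝ) / (#(G.layer r i) * m (i + 1) * m i))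
    (hφ0 lam) (hφ1 lam)
    (fun j hj₁ hj₂ => by rw [hφ j hj₁ hj₂, show h + 2 - j = h + 1 - j + 1 by omega]) hne
    (fun i hi => by rw [layer_eq_empty_of_lt hheight (Nat.lt_succ_of_le hi), card_empty,
      Nat.cast_zero, zero_div])
  obtain ⟨v₀, hv₀⟩ := hmax
  rw [htree.det_smul_one_sub_randic hdeg lam _
      (fun v => div_ne_zero (hφne _ (by omega)) (hφne _ (by omega))) hrec,
    prod_dist_eq_prod_range_pow_card_layer (fun i => φ (h - i + 1) lam / φ (h - i) lam) hheight]
  exact prod_range_div_pow_eq_mul_prod_filter _ _ h (hφ0 lam) hne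
    (by rw [htree.connected.layer_zero, card_singleton])
    (fun i hi => htree.card_layer_le_card_layer_succ hdeg (layer_nonempty_of_le hv₀ (by omega)))

theorem stmt7 {V : Type*} [Fintype V] [DecidableEq V]
    (G : SimpleGraph V) [DecidableRel G.Adj] (r : V) (h : ℕ) (m : ℕ → ℕ)
    (hh : 1 ≤ h) (hm0 : 2 ≤ m 0)
    (htree : G.IsTree)
    (hheight : ∀ v, G.dist r v ≤ h)
    (hmax : ∃ v, G.dist r v = h)
    (hdeg : ∀ v, G.degree v = m (G.dist r v))
    (φ : ℕ → ℝ → ℝ)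
    (hφ0 : ∀ x, φ 0 x = 1)
    (hφ1 : ∀ x, φ 1 x = x)
    (hφ : ∀ j, 2 ≤ j → j ≤ h + 1 → ∀ x, φ j x =
      x * φ (j - 1) x -
        (({v : V | G.dist r v = h + 2 - j}.ncard : ℝ) /
          (({v : V | G.dist r v = h + 1 - j}.ncard : ℝ) *
            (m (h + 2 - j) : ℝ) * (m (h + 1 - j) : ℝ))) * φ (j - 2) x)
    (lam : ℝ)
    (hne : ∀ j, 1 ≤ j → j ≤ h → φ j lam ≠ 0)
    (hne' : φ (h + 1) lam ≠ 0) :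
    (lam • (1 : Matrix V V ℝ) - randic G).det =
      φ (h + 1) lam *
        ∏ j ∈ (Finset.Icc 1 h).filter
            (fun j => {v : V | G.dist r v = h - j}.ncard <
              {v : V | G.dist r v = h - j + 1}.ncard),
          φ j lam ^ ({v : V | G.dist r v = h - j + 1}.ncard -
            {v : V | G.dist r v = h - j}.ncard) :=
  stmt7_general G r h m htree hheight hmax hdeg φ hφ0 hφ1 hφ lam hne hne'
end

section
/- Let T^1_{m_0,m_1,…,m_{h−1}} be a level-wise regular tree with one root. Then the largest eigenvalue of the Randić matrix R(T^1) equals 1, and 1 is an eigenvalue of the matrix P_{h+1}. -/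
open Matrix

/-- The off-diagonal entry of the tridiagonal matrix `P_{h+1}` at (0-indexed)
position `(i, i+1)`. -/
noncomputable def odOne (h : ℕ) (m : ℕ → ℝ) (i : ℕ) : ℝ :=
  if i + 1 = h then Real.sqrt (1 / m 1)
  else Real.sqrt ((m (h - 1 - i) - 1) / (m (h - i) * m (h - 1 - i)))

/-- For `j ≤ h`, the leading `j × j` principal submatrix `P_j` of the
`(h+1) × (h+1)` symmetric tridiagonal matrix `P_{h+1}` (obtained for `j = h+1`). -/
noncomputable def Pmat (h : ℕ) (m : ℕ → ℝ) (j : ℕ) : Matrix (Fin j) (Fin j) ℝ :=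
  fun a b =>
    if a.val + 1 = b.val then odOne h m a.val
    else if b.val + 1 = a.val then odOne h m b.val
    else 0

/-!
The Randić matrix is entrywise nonnegative and `(√(deg v))ᵥ` is a positive eigenvector of it for
the eigenvalue `1`; comparing an arbitrary eigenvector `x` with it at a vertex maximising
`|x v| / √(deg v)` shows that no eigenvalue exceeds `1` in modulus.

Let `n ℓ` be the number of vertices at level `ℓ` (`n 0 = 1`, `n 1 = m 0`,
`n (ℓ + 1) = n ℓ * (m ℓ - 1)`), `s ℓ = n ℓ * m ℓ` the degree sum of level `ℓ`, and `n (ℓ + 1)` the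
number of edges between levels `ℓ` and `ℓ + 1`. The entry of `P_{h+1}` joining levels `ℓ` and
`ℓ + 1` is `n (ℓ + 1) / √(s ℓ * s (ℓ + 1))`, and every degree sum splits into the edges going up
and down (`s ℓ = n ℓ + n (ℓ + 1)` on inner levels, `s 0 = n 1`, and `s h = n h` as `m h = 1`),
which says exactly that `(√(s ℓ))` is an eigenvector of `P_{h+1}` for `1`. The tree gives
`m h = 1`, since a vertex at maximal distance from the root is a leaf, and `m ℓ ≥ 2` on the inner
levels, since a shortest path from the root to such a vertex crosses every level; this keeps all
`s ℓ` positive.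
-/

open Finset

namespace Matrix

variable {n : Type*} [Fintype n] [DecidableEq n]

theorem mem_spectrum_iff_exists_mulVec_eq_smul {K : Type*} [Field K] {A : Matrix n n K} {μ : K} :
    μ ∈ spectrum K A ↔ ∃ x ≠ 0, A *ᵥ x = μ • x := by
  rw [← spectrum_toLin', ← Module.End.hasEigenvalue_iff_mem_spectrum]
  constructor
  · intro h
    obtain ⟨x, hx⟩ := h.exists_hasEigenvector
    exact ⟨x, hx.2, by simpa using hx.apply_eq_smul⟩
  · rintro ⟨x, hx, hAx⟩
    exact Module.End.hasEigenvalue_of_hasEigenvector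
      ⟨Module.End.mem_eigenspace_iff.2 (by simpa using hAx), hx⟩

theorem abs_le_of_mem_spectrum_of_mulVec_eq_smul {A : Matrix n n ℝ} (hA : ∀ i j, 0 ≤ A i j)
    {p : n → ℝ} (hp : ∀ i, 0 < p i) {ρ : ℝ} (hAp : A *ᵥ p = ρ • p) {μ : ℝ}
    (hμ : μ ∈ spectrum ℝ A) : |μ| ≤ ρ := by
  obtain ⟨x, hx, hAx⟩ := mem_spectrum_iff_exists_mulVec_eq_smul.1 hμ
  obtain ⟨w, hw⟩ := Function.ne_iff.1 hx
  have : Nonempty n := ⟨w⟩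
  obtain ⟨u, hu⟩ := Finite.exists_max fun i => |x i| / p i
  have hbound : ∀ v, |x v| ≤ |x u| / p u * p v := fun v => (div_le_iff₀ (hp v)).1 (hu v)
  have hxu : 0 < |x u| := by
    have : 0 < |x w| / p w := div_pos (abs_pos.2 hw) (hp w)
    exact (div_pos_iff_of_pos_right (hp u)).1 (this.trans_le (hu w))
  refine le_of_mul_le_mul_right ?_ hxu
  calc |μ| * |x u| = |∑ v, A u v * x v| := by
        rw [← abs_mul, ← smul_eq_mul, ← Pi.smul_apply, ← hAx]; rfl
    _ ≤ ∑ v, A u v * |x v| := by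
        refine (abs_sum_le_sum_abs _ _).trans_eq (sum_congr rfl fun v _ => ?_)
        rw [abs_mul, abs_of_nonneg (hA u v)]
    _ ≤ ∑ v, A u v * (|x u| / p u * p v) :=
        sum_le_sum fun v _ => mul_le_mul_of_nonneg_left (hbound v) (hA u v)
    _ = |x u| / p u * (A *ᵥ p) u := by
        simp only [mulVec, dotProduct, mul_sum]
        exact sum_congr rfl fun v _ => by ring
    _ = ρ * |x u| := by
        rw [hAp, Pi.smul_apply, smul_eq_mul]
        field_simp [(hp u).ne']

theorem isGreatest_spectrum_of_mulVec_eq_smul [Nonempty n] {A : Matrix n n ℝ}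
    (hA : ∀ i j, 0 ≤ A i j) {p : n → ℝ} (hp : ∀ i, 0 < p i) {ρ : ℝ} (hAp : A *ᵥ p = ρ • p) :
    IsGreatest (spectrum ℝ A) ρ := by
  refine ⟨mem_spectrum_iff_exists_mulVec_eq_smul.2 ⟨p, ?_, hAp⟩, fun μ hμ => ?_⟩
  · obtain ⟨i⟩ := ‹Nonempty n›
    exact Function.ne_iff.2 ⟨i, (hp i).ne'⟩
  · exact (le_abs_self μ).trans (abs_le_of_mem_spectrum_of_mulVec_eq_smul hA hp hAp hμ)

end Matrix

section Randic

variable {V : Type*} [Fintype V] [DecidableEq V] (G : SimpleGraph V) [DecidableRel G.Adj]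

theorem randic_nonneg (u v : V) : 0 ≤ randic G u v := by
  unfold randic
  split_ifs <;> positivity

theorem randic_mulVec_sqrt_degree (hG : ∀ v, 0 < G.degree v) :
    randic G *ᵥ (fun v => √(G.degree v : ℝ)) = fun v => √(G.degree v : ℝ) := by
  funext u
  have hu : (0 : ℝ) < G.degree u := by exact_mod_cast hG u
  have hterm : ∀ v ∈ G.neighborFinset u,
      1 / √((G.degree u : ℝ) * G.degree v) * √(G.degree v : ℝ) = 1 / √(G.degree u : ℝ) :=
    fun v _ => by
      have hv : (0 : ℝ) < √(G.degree v : ℝ) := Real.sqrt_pos.2 (by exact_mod_cast hG v)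
      rw [Real.sqrt_mul hu.le]
      field_simp
  simp only [mulVec, dotProduct, randic, ite_mul, zero_mul]
  rw [← sum_filter, ← SimpleGraph.neighborFinset_eq_filter, sum_congr rfl hterm, sum_const,
    SimpleGraph.card_neighborFinset_eq_degree, nsmul_eq_mul, mul_one_div, Real.div_sqrt]

theorem isGreatest_spectrum_randic [Nonempty V] (hG : ∀ v, 0 < G.degree v) :
    IsGreatest (spectrum ℝ (randic G)) 1 :=
  isGreatest_spectrum_of_mulVec_eq_smul (randic_nonneg G)
    (p := fun v => √(G.degree v : ℝ)) (fun v => Real.sqrt_pos.2 (by exact_mod_cast hG v))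
    (by rw [one_smul, randic_mulVec_sqrt_degree G hG])

end Randic

namespace SimpleGraph

variable {V : Type*} {G : SimpleGraph V}

theorem Walk.dist_getVert_of_length_eq_dist {u v : V} {p : G.Walk u v}
    (hp : p.length = G.dist u v) {i : ℕ} (hi : i ≤ p.length) : G.dist u (p.getVert i) = i := by
  rw [← length_eq_dist_of_subwalk hp (p.isSubwalk_take i), Walk.take_length]
  omega

theorem Walk.two_le_degree_getVert_of_length_eq_dist [Fintype V] [DecidableEq V]
    [DecidableRel G.Adj] {u v : V} {p : G.Walk u v} (hp : p.length = G.dist u v) {i : ℕ}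
    (hi₀ : 0 < i) (hi : i < p.length) : 2 ≤ G.degree (p.getVert i) := by
  have hprev : G.Adj (p.getVert i) (p.getVert (i - 1)) := by
    simpa [Nat.sub_add_cancel hi₀] using (p.adj_getVert_succ (i := i - 1) (by omega)).symm
  have hnext : G.Adj (p.getVert i) (p.getVert (i + 1)) := p.adj_getVert_succ hi
  have hne : p.getVert (i - 1) ≠ p.getVert (i + 1) := fun h => by
    have := congrArg (G.dist u) h
    rw [p.dist_getVert_of_length_eq_dist hp (by omega),
      p.dist_getVert_of_length_eq_dist hp (by omega)] at this
    omega
  rw [← card_neighborFinset_eq_degree, ← card_pair hne]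
  exact card_le_card (by simp [insert_subset_iff, hprev, hnext])

theorem IsTree.eq_of_adj_of_dist_lt (hG : G.IsTree) {r v w₁ w₂ : V} (h₁ : G.Adj v w₁)
    (h₂ : G.Adj v w₂) (hd₁ : G.dist r w₁ < G.dist r v) (hd₂ : G.dist r w₂ < G.dist r v) :
    w₁ = w₂ := by
  have hpath : ∀ w (hw : G.Adj v w), G.dist r w < G.dist r v →
      ∃ p : G.Walk v r, p.IsPath ∧ p.snd = w := by
    intro w hw hlt
    obtain ⟨q, hq⟩ := hG.connected.exists_walk_length_eq_dist w r
    refine ⟨.cons hw q, Walk.isPath_of_length_eq_dist _ ?_, Walk.snd_cons _ _⟩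
    have := hG.dist_eq_dist_add_one_of_adj r hw
    rw [Walk.length_cons, hq, dist_comm, dist_comm (u := v)]
    omega
  obtain ⟨p₁, hp₁, rfl⟩ := hpath w₁ h₁ hd₁
  obtain ⟨p₂, hp₂, rfl⟩ := hpath w₂ h₂ hd₂
  rw [(hG.existsUnique_path v r).unique hp₁ hp₂]

theorem IsTree.degree_eq_one_of_forall_dist_le [Fintype V] [DecidableRel G.Adj]
    (hG : G.IsTree) {r v : V} (hv : v ≠ r) (hmax : ∀ w, G.dist r w ≤ G.dist r v) :
    G.degree v = 1 := by
  have : Nontrivial V := ⟨v, r, hv⟩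
  have hpos := hG.connected.preconnected.degree_pos_of_nontrivial v
  have hcloser : ∀ w, G.Adj v w → G.dist r w < G.dist r v := fun w hw =>
    (hmax w).lt_of_ne (hG.dist_ne_of_adj r hw).symm
  have : G.degree v ≤ 1 := by
    rw [← card_neighborFinset_eq_degree]
    refine card_le_one.2 fun a ha b hb => ?_
    rw [mem_neighborFinset] at ha hb
    exact hG.eq_of_adj_of_dist_lt ha hb (hcloser a ha) (hcloser b hb)
  omega

end SimpleGraph

def symmTridiag (c : ℕ → ℝ) (n : ℕ) : Matrix (Fin n) (Fin n) ℝ :=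
  fun a b => if a.val + 1 = b.val then c a else if b.val + 1 = a.val then c b else 0

theorem Pmat_eq_symmTridiag (h : ℕ) (m : ℕ → ℝ) (n : ℕ) :
    Pmat h m n = symmTridiag (odOne h m) n :=
  rfl

theorem symmTridiag_mulVec (c w : ℕ → ℝ) {n : ℕ} (j : Fin n) :
    (symmTridiag c n *ᵥ fun i => w i) j =
      (if j.val = 0 then 0 else c (j - 1) * w (j - 1)) +
        (if j.val + 1 < n then c j * w (j + 1) else 0) := by
  have hsplit : ∀ b : ℕ, (if j.val + 1 = b then c j else if b + 1 = j.val then c b else 0) * w b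
      = (if b = j.val - 1 then (if j.val = 0 then 0 else c b * w b) else 0) +
        (if b = j.val + 1 then c j * w b else 0) := fun b => by
    split_ifs <;> first | omega | ring
  simp only [mulVec, dotProduct, symmTridiag]
  rw [Fin.sum_univ_eq_sum_range
      (fun b => (if j.val + 1 = b then c j else if b + 1 = j.val then c b else 0) * w b),
    sum_congr rfl fun b _ => hsplit b, sum_add_distrib, sum_ite_eq', sum_ite_eq',
    if_pos (mem_range.2 (by omega))]
  simp only [mem_range]

/-- Read `s j` as the degree sum of the `j`-th class of an equitable partition of a graph and
`e j` as the number of edges between classes `j` and `j + 1`; the eigenvector is `(√(s j))ⱼ`. -/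
theorem one_mem_spectrum_symmTridiag {n : ℕ} [NeZero n] {c s e : ℕ → ℝ}
    (hs : ∀ j < n, 0 < s j) (hc : ∀ j, j + 1 < n → c j * √(s j * s (j + 1)) = e j)
    (he : ∀ j < n, (if j = 0 then 0 else e (j - 1)) + (if j + 1 < n then e j else 0) = s j) :
    1 ∈ spectrum ℝ (symmTridiag c n) := by
  refine mem_spectrum_iff_exists_mulVec_eq_smul.2
    ⟨fun j => √(s j), Function.ne_iff.2 ⟨0, (Real.sqrt_pos.2 (hs 0 n.pos_of_neZero)).ne'⟩, ?_⟩
  funext j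
  have hfwd : ∀ k, k + 1 < n → c k * √(s (k + 1)) = e k / √(s k) := fun k hk => by
    rw [← hc k hk, Real.sqrt_mul (hs k (by omega)).le]
    field_simp [(Real.sqrt_pos.2 (hs k (by omega))).ne']
  have hbwd : ∀ k, k + 1 < n → c k * √(s k) = e k / √(s (k + 1)) := fun k hk => by
    rw [← hc k hk, Real.sqrt_mul (hs k (by omega)).le]
    field_simp [(Real.sqrt_pos.2 (hs (k + 1) hk)).ne']
  rw [symmTridiag_mulVec c (fun i => √(s i)), one_smul]
  calc _ = ((if j.val = 0 then 0 else e (j - 1)) + (if j.val + 1 < n then e j else 0))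
        / √(s j) := by
        rw [add_div]
        congr 1
        · split_ifs
          · simp
          · rw [hbwd _ (by omega), Nat.sub_add_cancel (by omega)]
        · split_ifs with hj
          · exact hfwd _ hj
          · simp
    _ = √(s j) := by rw [he j j.isLt, Real.div_sqrt]

noncomputable def levelCard (m : ℕ → ℝ) : ℕ → ℝ
  | 0 => 1
  | 1 => m 0
  | ℓ + 2 => levelCard m (ℓ + 1) * (m (ℓ + 1) - 1)

theorem levelCard_add_levelCard_succ {m : ℕ → ℝ} {ℓ : ℕ} (hℓ : 1 ≤ ℓ) :
    levelCard m ℓ + levelCard m (ℓ + 1) = levelCard m ℓ * m ℓ := by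
  obtain ⟨k, rfl⟩ : ∃ k, ℓ = k + 1 := ⟨ℓ - 1, by omega⟩
  rw [levelCard]
  ring

section Levels

variable {h : ℕ} {m : ℕ → ℝ} (hm0 : 0 < m 0) (hm : ∀ ℓ, 1 ≤ ℓ → ℓ < h → 1 < m ℓ)
include hm0 hm

theorem levelCard_pos {ℓ : ℕ} (hℓ : ℓ ≤ h) : 0 < levelCard m ℓ := by
  induction ℓ using Nat.twoStepInduction with
  | zero => exact one_pos
  | one => exact hm0
  | more k _ ih =>
    rw [levelCard]
    exact mul_pos (ih (by omega)) (sub_pos.2 (hm _ (by omega) (by omega)))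

theorem pos_of_le_height (hmh : m h = 1) {ℓ : ℕ} (hℓ : ℓ ≤ h) : 0 < m ℓ := by
  rcases Nat.eq_zero_or_pos ℓ with rfl | hℓ₀
  · exact hm0
  rcases hℓ.lt_or_eq with hlt | rfl
  · exact one_pos.trans (hm ℓ hℓ₀ hlt)
  · exact hmh ▸ one_pos

theorem odOne_mul_sqrt_levelCard (hmh : m h = 1) {j : ℕ} (hj : j < h) :
    odOne h m j * √(levelCard m (h - j) * m (h - j) * (levelCard m (h - (j + 1)) * m (h - (j + 1))))
      = levelCard m (h - j) := by
  have hmpos : ∀ ℓ ≤ h, 0 < m ℓ := fun ℓ => pos_of_le_height hm0 hm hmh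
  obtain ⟨ℓ, rfl⟩ : ∃ ℓ, h = j + 1 + ℓ := ⟨h - (j + 1), by omega⟩
  rw [show j + 1 + ℓ - j = ℓ + 1 by omega, show j + 1 + ℓ - (j + 1) = ℓ by omega, odOne]
  rcases ℓ with _ | k
  · have hm1 := hmpos 1 (by omega)
    simp only [levelCard, if_pos]
    rw [← Real.sqrt_mul' _ (by positivity),
      show 1 / m 1 * (m 0 * m 1 * (1 * m 0)) = m 0 ^ 2 by field_simp, Real.sqrt_sq hm0.le]
  · have hmk := hmpos (k + 1) (by omega)
    have hmk' := hmpos (k + 2) (by omega)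
    have hN := levelCard_pos hm0 hm (ℓ := k + 1) (by omega)
    have hmk₁ : 0 ≤ m (k + 1) - 1 := sub_nonneg.2 (hm (k + 1) (by omega) (by omega)).le
    set N := levelCard m (k + 1)
    have hsq : (m (k + 1) - 1) / (m (k + 2) * m (k + 1)) *
        (N * (m (k + 1) - 1) * m (k + 2) * (N * m (k + 1))) = (N * (m (k + 1) - 1)) ^ 2 := by
      field_simp
    rw [if_neg (by omega), show j + 1 + (k + 1) - 1 - j = k + 1 by omega,
      show j + 1 + (k + 1) - j = k + 2 by omega, levelCard, ← Real.sqrt_mul' _ (by positivity),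
      hsq, Real.sqrt_sq (by positivity)]

/-- Row `j` of `Pmat h m (h + 1)` belongs to level `h - j`. -/
theorem one_mem_spectrum_Pmat (hh : 1 ≤ h) (hmh : m h = 1) :
    1 ∈ spectrum ℝ (Pmat h m (h + 1)) := by
  rw [Pmat_eq_symmTridiag]
  refine one_mem_spectrum_symmTridiag (s := fun j => levelCard m (h - j) * m (h - j))
    (e := fun j => levelCard m (h - j))
    (fun j hj => mul_pos (levelCard_pos hm0 hm (by omega)) (pos_of_le_height hm0 hm hmh (by omega)))
    (fun j hj => odOne_mul_sqrt_levelCard hm0 hm hmh (by omega)) fun j hj => ?_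
  rcases Nat.eq_zero_or_pos j with rfl | hj₀
  · simp [hmh, show h ≠ 0 by omega]
  rcases (Nat.lt_succ_iff.1 hj).lt_or_eq with hjh | rfl
  · rw [if_neg hj₀.ne', if_pos (by omega), show h - (j - 1) = h - j + 1 by omega, add_comm]
    exact levelCard_add_levelCard_succ (by omega)
  · simp [hj₀.ne', Nat.sub_sub_self hj₀, levelCard]

end Levels

theorem stmt13_general {V : Type*} [Fintype V] [DecidableEq V]
    (G : SimpleGraph V) [DecidableRel G.Adj] (r : V) (h : ℕ) (m : ℕ → ℕ)
    (hh : 1 ≤ h)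
    (htree : G.IsTree)
    (hheight : ∀ v, G.dist r v ≤ h)
    (hmax : ∃ v, G.dist r v = h)
    (hdeg : ∀ v, G.degree v = m (G.dist r v)) :
    IsGreatest (spectrum ℝ (randic G)) 1 ∧
    (1 : ℝ) ∈ spectrum ℝ (Pmat h (fun i => (m i : ℝ)) (h + 1)) := by
  obtain ⟨v, hv⟩ := hmax
  have hvr : v ≠ r := by
    rintro rfl
    rw [SimpleGraph.dist_self] at hv
    omega
  have : Nontrivial V := ⟨v, r, hvr⟩
  have hpos (u : V) : 0 < G.degree u := htree.connected.preconnected.degree_pos_of_nontrivial u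
  have hroot : (0 : ℝ) < m 0 := by
    have := hpos r
    rw [hdeg, SimpleGraph.dist_self] at this
    exact_mod_cast this
  obtain ⟨p, hp⟩ := htree.connected.exists_walk_length_eq_dist r v
  have hinner : ∀ ℓ, 1 ≤ ℓ → ℓ < h → 1 < (m ℓ : ℝ) := fun ℓ h₁ h₂ => by
    have := p.two_le_degree_getVert_of_length_eq_dist hp h₁ (by omega)
    rw [hdeg, p.dist_getVert_of_length_eq_dist hp (by omega)] at this
    exact_mod_cast this
  have hleaf := htree.degree_eq_one_of_forall_dist_le hvr (hv ▸ hheight)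
  rw [hdeg, hv] at hleaf
  exact ⟨isGreatest_spectrum_randic G hpos,
    one_mem_spectrum_Pmat hroot hinner hh (by exact_mod_cast hleaf)⟩

theorem stmt13 {V : Type*} [Fintype V] [DecidableEq V]
    (G : SimpleGraph V) [DecidableRel G.Adj] (r : V) (h : ℕ) (m : ℕ → ℕ)
    (hh : 1 ≤ h) (hm0 : 2 ≤ m 0)
    (htree : G.IsTree)
    (hheight : ∀ v, G.dist r v ≤ h)
    (hmax : ∃ v, G.dist r v = h)
    (hdeg : ∀ v, G.degree v = m (G.dist r v)) :
    IsGreatest (spectrum ℝ (randic G)) 1 ∧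
    (1 : ℝ) ∈ spectrum ℝ (Pmat h (fun i => (m i : ℝ)) (h + 1)) :=
  stmt13_general G r h m hh htree hheight hmax hdeg
end
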